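/- arXiv:2309.11388 — 4 statements merged into one kernel-verified Lean document; each statement's English description precedes it below -/
import Mathlib

section
/- (Kakeya–Hornich, interval criterion) Let ∑ z_n be a convergent series of positive reals with z_n ≥ z_{n+1} for all n. Then the achievement set E(z_n) = { ∑_{n∈A} z_n : A ⊆ ℕ } is a compact interval if and only if z_n ≤ ∑_{k>n} z_k for every n. -/
/-!
If every term is at most the sum of the terms after it, the greedy algorithm reaches every
`x ∈ [0, ∑ a]`: take `a n` whenever it does not overshoot `x`. A skipped term leaves a gap
`x - (partial sum) < a n`, which the remaining tail covers, so the invariant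
`x ≤ partial sum + tail` persists while the partial sums stay `≤ x`; as the tails tend to `0`,
the chosen subseries sums to `x`.

Conversely, if `a m` exceeds its tail `∑_{k > m} a k` for a non-increasing sequence, then a subsum
uses some `a k` with `k ≤ m` (and is `≥ a m`) or only terms after `m` (and is `≤` the tail), so
the open interval between the tail and `a m` misses the achievement set, although both endpoints
are subsums.
-/

open Set Finset


/-- The achievement set (set of all subsums) of the series `∑_{n ≥ 1} z n`. -/
def subsums (z : ℕ → ℝ) : Set ℝ :=
  {y | ∃ c : ℕ → Bool, HasSum (fun n => if c (n + 1) then z (n + 1) else 0) y}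

open Filter Topology

def achievementSet (a : ℕ → ℝ) : Set ℝ :=
  {x | ∃ s : Set ℕ, HasSum (s.indicator a) x}

open scoped Classical in
theorem subsums_eq_achievementSet (z : ℕ → ℝ) :
    subsums z = achievementSet (fun n => z (n + 1)) := by
  ext x
  constructor
  · rintro ⟨c, hc⟩
    refine ⟨{n | c (n + 1)}, ?_⟩
    convert hc using 1
    ext n
    simp [indicator_apply]
  · rintro ⟨s, hs⟩
    refine ⟨fun n => decide (n - 1 ∈ s), ?_⟩
    convert hs using 1
    ext n
    simp [indicator_apply]

section

variable {a : ℕ → ℝ}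

theorem tsum_nat_add_eq_add_tsum (hsum : Summable a) (n : ℕ) :
    ∑' k, a (k + n) = a n + ∑' k, a (k + (n + 1)) := by
  rw [((summable_nat_add_iff n).2 hsum).tsum_eq_zero_add, zero_add]
  simp only [add_right_comm _ 1 n, add_assoc]

theorem achievementSet_subset_Icc (hnonneg : ∀ n, 0 ≤ a n) (hsum : Summable a) :
    achievementSet a ⊆ Icc 0 (∑' k, a k) := by
  rintro x ⟨s, hs⟩
  exact ⟨hasSum_le (indicator_nonneg fun n _ => hnonneg n) hasSum_zero hs,
    hasSum_le (indicator_le_self' fun n _ => hnonneg n) hs hsum.hasSum⟩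

theorem hasSum_indicator_Ici (hsum : Summable a) (n : ℕ) :
    HasSum ((Ici n).indicator a) (∑' k, a (k + n)) := by
  have hhead : ∑ i ∈ range n, (Ici n).indicator a i = 0 :=
    Finset.sum_eq_zero fun i hi => indicator_of_notMem (by simpa using hi) a
  have htail : HasSum (fun k => (Ici n).indicator a (k + n)) (∑' k, a (k + n)) := by
    simpa [indicator_of_mem] using ((summable_nat_add_iff n).2 hsum).hasSum
  simpa [hhead] using (hasSum_nat_add_iff n).1 htail

theorem self_mem_achievementSet (n : ℕ) : a n ∈ achievementSet a :=
  ⟨{n}, by rw [indicator_singleton]; exact hasSum_pi_single n (a n)⟩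

theorem le_tsum_tail_or_le_of_mem_achievementSet (hnonneg : ∀ n, 0 ≤ a n) (hanti : Antitone a)
    (hsum : Summable a) {x : ℝ} (hx : x ∈ achievementSet a) (m : ℕ) :
    x ≤ ∑' k, a (k + (m + 1)) ∨ a m ≤ x := by
  obtain ⟨s, hs⟩ := hx
  have hind : ∀ n, 0 ≤ s.indicator a n := indicator_nonneg fun n _ => hnonneg n
  by_cases hhead : ∃ k ∈ s, k ≤ m
  · obtain ⟨k, hks, hkm⟩ := hhead
    right
    calc a m ≤ a k := hanti hkm
      _ = s.indicator a k := (indicator_of_mem hks a).symm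
      _ ≤ x := le_hasSum hs k fun n _ => hind n
  · push Not at hhead
    left
    have hsub : s ⊆ Ici (m + 1) := fun k hk => hhead k hk
    exact hasSum_le (indicator_le_indicator_of_subset hsub hnonneg) hs
      (hasSum_indicator_Ici hsum (m + 1))

theorem le_tsum_tail_of_ordConnected (hnonneg : ∀ n, 0 ≤ a n) (hanti : Antitone a)
    (hsum : Summable a) (hconn : (achievementSet a).OrdConnected) (m : ℕ) :
    a m ≤ ∑' k, a (k + (m + 1)) := by
  by_contra! hgap
  set T := ∑' k, a (k + (m + 1))
  have hmid : (T + a m) / 2 ∈ achievementSet a :=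
    hconn.out ⟨_, hasSum_indicator_Ici hsum (m + 1)⟩ (self_mem_achievementSet m)
      ⟨by linarith, by linarith⟩
  rcases le_tsum_tail_or_le_of_mem_achievementSet hnonneg hanti hsum hmid m with h | h <;>
    linarith

noncomputable def greedySum (a : ℕ → ℝ) (x : ℝ) : ℕ → ℝ
  | 0 => 0
  | n + 1 => if greedySum a x n + a n ≤ x then greedySum a x n + a n else greedySum a x n

def greedySet (a : ℕ → ℝ) (x : ℝ) : Set ℕ :=
  {n | greedySum a x n + a n ≤ x}

variable {x : ℝ}

theorem greedySum_eq_sum_indicator (n : ℕ) :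
    greedySum a x n = ∑ k ∈ range n, (greedySet a x).indicator a k := by
  induction n with
  | zero => rfl
  | succ n ih =>
    rw [sum_range_succ, ← ih]
    simp only [greedySum, greedySet, indicator_apply, mem_ofPred_eq]
    split_ifs <;> simp

theorem greedySum_le (hx : 0 ≤ x) (n : ℕ) : greedySum a x n ≤ x := by
  induction n with
  | zero => exact hx
  | succ n ih =>
    simp only [greedySum]
    split_ifs with h
    exacts [h, ih]

theorem le_greedySum_add_tsum (hsum : Summable a)
    (hcond : ∀ n, a n ≤ ∑' k, a (k + (n + 1))) (hx : x ≤ ∑' k, a k) (n : ℕ) :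
    x ≤ greedySum a x n + ∑' k, a (k + n) := by
  induction n with
  | zero => simpa [greedySum] using hx
  | succ n ih =>
    rw [tsum_nat_add_eq_add_tsum hsum n] at ih
    simp only [greedySum]
    split_ifs with h
    · linarith
    · linarith [hcond n]

theorem hasSum_indicator_greedySet (hnonneg : ∀ n, 0 ≤ a n) (hsum : Summable a)
    (hcond : ∀ n, a n ≤ ∑' k, a (k + (n + 1))) (hx0 : 0 ≤ x) (hx : x ≤ ∑' k, a k) :
    HasSum ((greedySet a x).indicator a) x := by
  rw [hasSum_iff_tendsto_nat_of_nonneg (indicator_nonneg fun n _ => hnonneg n)]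
  simp_rw [← greedySum_eq_sum_indicator]
  have hlower : Tendsto (fun n => x - ∑' k, a (k + n)) atTop (𝓝 x) := by
    simpa using tendsto_const_nhds.sub (tendsto_sum_nat_add a)
  exact tendsto_of_tendsto_of_tendsto_of_le_of_le hlower tendsto_const_nhds
    (fun n => by linarith [le_greedySum_add_tsum hsum hcond hx n]) (greedySum_le hx0)

theorem achievementSet_eq_Icc (hnonneg : ∀ n, 0 ≤ a n) (hsum : Summable a)
    (hcond : ∀ n, a n ≤ ∑' k, a (k + (n + 1))) :
    achievementSet a = Icc 0 (∑' k, a k) :=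
  (achievementSet_subset_Icc hnonneg hsum).antisymm fun _ ⟨hx0, hx⟩ =>
    ⟨_, hasSum_indicator_greedySet hnonneg hsum hcond hx0 hx⟩

end

/-- Kakeya–Hornich interval criterion: for a convergent positive non-increasing series,
the achievement set is a compact interval iff every term is at most its tail. -/
theorem stmt_7 (z : ℕ → ℝ)
    (hpos : ∀ n, 1 ≤ n → 0 < z n)
    (hanti : ∀ n, 1 ≤ n → z (n + 1) ≤ z n)
    (hsum : Summable (fun n : ℕ => z (n + 1))) :
    (∃ p q : ℝ, p ≤ q ∧ subsums z = Set.Icc p q) ↔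
      ∀ n : ℕ, 1 ≤ n → z n ≤ ∑' j : ℕ, z (n + 1 + j) := by
  set a : ℕ → ℝ := fun n => z (n + 1)
  have hnonneg (n : ℕ) : 0 ≤ a n := (hpos (n + 1) n.succ_pos).le
  have ha_anti : Antitone a := antitone_nat_of_succ_le fun n => hanti (n + 1) n.succ_pos
  have htail (n : ℕ) : ∑' j, z (n + 1 + 1 + j) = ∑' k, a (k + (n + 1)) :=
    tsum_congr fun k => congrArg z (by omega)
  rw [subsums_eq_achievementSet]
  constructor
  · rintro ⟨p, q, -, hE⟩ n hn
    obtain ⟨m, rfl⟩ := Nat.exists_eq_add_of_le' hn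
    rw [htail]
    exact le_tsum_tail_of_ordConnected hnonneg ha_anti hsum (hE ▸ ordConnected_Icc) m
  · intro hcond
    refine ⟨0, _, tsum_nonneg hnonneg, achievementSet_eq_Icc hnonneg hsum fun n => ?_⟩
    rw [← htail]
    exact hcond (n + 1) n.succ_pos
end

section
/- (Kakeya–Hornich, Cantor criterion) Let ∑ z_n be a convergent series of positive reals with z_n ≥ z_{n+1} for all n. If z_n > ∑_{k>n} z_k for all but finitely many n, then the achievement set E(z_n) is homeomorphic to the Cantor set. -/
open Set Finset


/-!
The subsum map `c ↦ ∑ₙ [c n] zₙ` is a continuous surjection from the Cantor space `ℕ → Bool`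
onto the achievement set `E`, so `E` is compact, and flipping a single far-out coordinate moves a
subsum by an arbitrarily small positive amount, so `E` is perfect. If `zₙ > rₙ := ∑_{k>n} z_k`
for all `n ≥ N`, then the tail terms from `N` on leave a gap `(s + rₙ, s + zₙ)` in every
interval `[s, s + rₙ₋₁]` of level `n`, so the subsums of the tail form a set with empty
interior, and `E` is a finite union of translates of it. Finally, a nonempty compact perfect
subset of `ℝ` with empty interior is homeomorphic to the Cantor set: cutting it repeatedly at a
missing point of the middle third of its hull gives a disjoint binary scheme whose pieces shrink
by a factor `2/3` at every step.
-/

open Filter Topology CantorScheme PiNat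

theorem Perfect.inter_Iic_of_notMem {α : Type*} [TopologicalSpace α] [LinearOrder α]
    [OrderClosedTopology α] {K : Set α} {x : α} (hK : Perfect K) (hx : x ∉ K) :
    Perfect (K ∩ Iic x) := by
  have hKx : K ∩ Iic x = Iio x ∩ K := by
    ext y
    constructor
    · rintro ⟨hy, hyx⟩
      exact ⟨hyx.lt_of_ne (ne_of_mem_of_not_mem hy hx), hy⟩
    · rintro ⟨hyx, hy⟩
      exact ⟨hy, hyx.le⟩
  refine ⟨hK.closed.inter isClosed_Iic, ?_⟩
  rw [hKx]
  exact hK.acc.open_inter isOpen_Iio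

theorem Perfect.inter_Ici_of_notMem {α : Type*} [TopologicalSpace α] [LinearOrder α]
    [OrderClosedTopology α] {K : Set α} {x : α} (hK : Perfect K) (hx : x ∉ K) :
    Perfect (K ∩ Ici x) :=
  Perfect.inter_Iic_of_notMem (α := αᵒᵈ) hK hx

theorem interior_biUnion_eq_empty {X ι : Type*} [TopologicalSpace X] [BaireSpace X]
    {S : Set ι} {f : ι → Set X} (hS : S.Countable) (hclosed : ∀ i ∈ S, IsClosed (f i))
    (hint : ∀ i ∈ S, interior (f i) = ∅) : interior (⋃ i ∈ S, f i) = ∅ := by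
  simp only [interior_eq_empty_iff_dense_compl, compl_iUnion₂] at hint ⊢
  exact dense_biInter_of_isOpen (fun i hi => (hclosed i hi).isOpen_compl) hS hint

structure IsCantorLike (K : Set ℝ) : Prop where
  nonempty : K.Nonempty
  isCompact : IsCompact K
  perfect : Perfect K
  interior_eq_empty : interior K = ∅

-- A junk value unless `K` is Cantor-like, see `IsCantorLike.middleGap_spec`.
noncomputable def middleGap (K : Set ℝ) : ℝ :=
  Classical.epsilon fun x =>
    x ∈ Ioo ((2 * sInf K + sSup K) / 3) ((sInf K + 2 * sSup K) / 3) ∧ x ∉ K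

noncomputable def gapHalf (K : Set ℝ) : Bool → Set ℝ
  | false => K ∩ Iic (middleGap K)
  | true => K ∩ Ici (middleGap K)

noncomputable def gapScheme (K : Set ℝ) : List Bool → Set ℝ
  | [] => K
  | b :: l => gapHalf (gapScheme K l) b

namespace IsCantorLike

variable {K : Set ℝ}

theorem sInf_mem (hK : IsCantorLike K) : sInf K ∈ K := hK.isCompact.sInf_mem hK.nonempty

theorem sSup_mem (hK : IsCantorLike K) : sSup K ∈ K := hK.isCompact.sSup_mem hK.nonempty

theorem sInf_lt_sSup (hK : IsCantorLike K) : sInf K < sSup K := by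
  obtain ⟨y, ⟨-, hy⟩, hne⟩ :=
    preperfect_iff_nhds.1 hK.perfect.acc _ hK.sInf_mem univ univ_mem
  exact (csInf_le hK.isCompact.bddBelow hy).lt_of_ne' hne |>.trans_le
    (le_csSup hK.isCompact.bddAbove hy)

theorem middleGap_spec (hK : IsCantorLike K) :
    middleGap K ∈ Ioo ((2 * sInf K + sSup K) / 3) ((sInf K + 2 * sSup K) / 3) ∧
      middleGap K ∉ K := by
  refine Classical.epsilon_spec (Set.not_subset.1 fun hsub => ?_)
  have h := interior_maximal hsub isOpen_Ioo
  rw [hK.interior_eq_empty, subset_empty_iff, Set.Ioo_eq_empty_iff] at h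
  exact h (by linarith [hK.sInf_lt_sSup])

end IsCantorLike

section CantorLike

variable {K : Set ℝ}

theorem isCantorLike_gapHalf (hK : IsCantorLike K) (b : Bool) : IsCantorLike (gapHalf K b) := by
  obtain ⟨⟨hlo, hhi⟩, hgap⟩ := hK.middleGap_spec
  have hlt := hK.sInf_lt_sSup
  cases b
  · exact ⟨⟨sInf K, hK.sInf_mem, by simp only [Set.mem_Iic]; linarith⟩,
      hK.isCompact.inter_right isClosed_Iic, hK.perfect.inter_Iic_of_notMem hgap,
      subset_empty_iff.1 (hK.interior_eq_empty ▸ interior_mono inter_subset_left)⟩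
  · exact ⟨⟨sSup K, hK.sSup_mem, by simp only [Set.mem_Ici]; linarith⟩,
      hK.isCompact.inter_right isClosed_Ici, hK.perfect.inter_Ici_of_notMem hgap,
      subset_empty_iff.1 (hK.interior_eq_empty ▸ interior_mono inter_subset_left)⟩

theorem disjoint_gapHalf (hK : IsCantorLike K) : Disjoint (gapHalf K false) (gapHalf K true) := by
  rw [Set.disjoint_left]
  rintro y ⟨hy, hyg⟩ ⟨-, hgy⟩
  exact hK.middleGap_spec.2 (le_antisymm hyg (Set.mem_Ici.1 hgy) ▸ hy)

theorem diam_gapHalf_le (hK : IsCantorLike K) (b : Bool) :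
    Metric.diam (gapHalf K b) ≤ 2 / 3 * Metric.diam K := by
  obtain ⟨⟨hlo, hhi⟩, -⟩ := hK.middleGap_spec
  have hlt := hK.sInf_lt_sSup
  rw [Real.diam_eq hK.isCompact.isBounded]
  cases b
  · calc Metric.diam (gapHalf K false)
        ≤ Metric.diam (Icc (sInf K) (middleGap K)) :=
          Metric.diam_mono (fun y ⟨hy, hyg⟩ => ⟨csInf_le hK.isCompact.bddBelow hy, hyg⟩)
            (Metric.isBounded_Icc _ _)
      _ ≤ 2 / 3 * (sSup K - sInf K) := by rw [Real.diam_Icc (by linarith)]; linarith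
  · calc Metric.diam (gapHalf K true)
        ≤ Metric.diam (Icc (middleGap K) (sSup K)) :=
          Metric.diam_mono (fun y ⟨hy, hgy⟩ => ⟨hgy, le_csSup hK.isCompact.bddAbove hy⟩)
            (Metric.isBounded_Icc _ _)
      _ ≤ 2 / 3 * (sSup K - sInf K) := by rw [Real.diam_Icc (by linarith)]; linarith

theorem isCantorLike_gapScheme (hK : IsCantorLike K) (l : List Bool) :
    IsCantorLike (gapScheme K l) := by
  induction l with
  | nil => exact hK
  | cons b l ih => exact isCantorLike_gapHalf ih b

theorem diam_gapScheme_res_le (hK : IsCantorLike K) (x : ℕ → Bool) (n : ℕ) :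
    Metric.diam (gapScheme K (res x n)) ≤ (2 / 3) ^ n * Metric.diam K := by
  induction n with
  | zero => simp [gapScheme]
  | succ n ih =>
    calc Metric.diam (gapScheme K (res x (n + 1)))
        ≤ 2 / 3 * Metric.diam (gapScheme K (res x n)) :=
          diam_gapHalf_le (isCantorLike_gapScheme hK _) _
      _ ≤ (2 / 3) ^ (n + 1) * Metric.diam K := by rw [pow_succ]; nlinarith

theorem tendsto_two_thirds_pow_mul (a : ℝ) :
    Tendsto (fun n : ℕ => (2 / 3 : ℝ) ^ n * a) atTop (𝓝 0) := by
  simpa using (tendsto_pow_atTop_nhds_zero_of_lt_one (by norm_num) (by norm_num)).mul_const a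

theorem vanishingDiam_gapScheme (hK : IsCantorLike K) : VanishingDiam (gapScheme K) := fun x =>
  (ENNReal.tendsto_toReal_iff
    (fun _ => (isCantorLike_gapScheme hK _).isCompact.isBounded.ediam_ne_top)
    ENNReal.zero_ne_top).1 <|
    squeeze_zero (fun _ => Metric.diam_nonneg) (diam_gapScheme_res_le hK x)
      (tendsto_two_thirds_pow_mul _)

theorem closureAntitone_gapScheme (hK : IsCantorLike K) : ClosureAntitone (gapScheme K) :=
  CantorScheme.Antitone.closureAntitone (fun _ b => by cases b <;> exact inter_subset_left)
    fun l => (isCantorLike_gapScheme hK l).isCompact.isClosed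

theorem disjoint_gapScheme (hK : IsCantorLike K) : CantorScheme.Disjoint (gapScheme K) := by
  rintro l (_ | _) (_ | _) hne
  · exact absurd rfl hne
  · exact disjoint_gapHalf (isCantorLike_gapScheme hK l)
  · exact (disjoint_gapHalf (isCantorLike_gapScheme hK l)).symm
  · exact absurd rfl hne

theorem exists_mem_gapScheme_res {y : ℝ} (hy : y ∈ K) (n : ℕ) :
    ∃ x : ℕ → Bool, y ∈ gapScheme K (res x n) := by
  induction n with
  | zero => exact ⟨fun _ => false, hy⟩
  | succ n ih =>
    obtain ⟨x, hx⟩ := ih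
    obtain ⟨b, hb⟩ : ∃ b, y ∈ gapHalf (gapScheme K (res x n)) b := by
      rcases le_total y (middleGap (gapScheme K (res x n))) with h | h
      exacts [⟨false, hx, h⟩, ⟨true, hx, h⟩]
    refine ⟨Function.update x n b, ?_⟩
    rwa [res_succ, res_eq_res.2 fun m hm => Function.update_of_ne hm.ne _ _, Function.update_self]

theorem IsCantorLike.nonempty_homeomorph (hK : IsCantorLike K) : Nonempty ((ℕ → Bool) ≃ₜ K) := by
  have hdom : (inducedMap (gapScheme K)).1 = univ :=
    (closureAntitone_gapScheme hK).map_of_vanishingDiam (vanishingDiam_gapScheme hK)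
      fun l => (isCantorLike_gapScheme hK l).nonempty
  let f : (ℕ → Bool) → ℝ := fun x => (inducedMap (gapScheme K)).2 ⟨x, hdom ▸ mem_univ x⟩
  have hf : Continuous f :=
    (vanishingDiam_gapScheme hK).map_continuous.comp (continuous_id.subtype_mk _)
  have hinj : Function.Injective f := fun x y hxy =>
    congrArg Subtype.val ((disjoint_gapScheme hK).map_injective hxy)
  have hmem : ∀ x n, f x ∈ gapScheme K (res x n) := fun x => map_mem _
  have hrange : range f = K := by
    refine (range_subset_iff.2 fun x => hmem x 0).antisymm fun y hy => ?_
    rw [← (isCompact_range hf).isClosed.closure_eq, Metric.mem_closure_iff]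
    intro ε hε
    obtain ⟨n, hn⟩ := ((tendsto_two_thirds_pow_mul _).eventually (gt_mem_nhds hε)).exists
    obtain ⟨x, hx⟩ := exists_mem_gapScheme_res hy n
    refine ⟨f x, mem_range_self x, ?_⟩
    calc dist y (f x) ≤ Metric.diam (gapScheme K (res x n)) :=
          Metric.dist_le_diam_of_mem (isCantorLike_gapScheme hK _).isCompact.isBounded hx
            (hmem x n)
      _ ≤ (2 / 3) ^ n * Metric.diam K := diam_gapScheme_res_le hK x n
      _ < ε := hn
  exact ⟨(hf.isClosedEmbedding hinj).isEmbedding.toHomeomorph.trans (Homeomorph.setCongr hrange)⟩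

end CantorLike

noncomputable def subsum (u : ℕ → ℝ) (c : ℕ → Bool) : ℝ := ∑' n, if c n then u n else 0

def prefixSum (u : ℕ → ℝ) (c : ℕ → Bool) (n : ℕ) : ℝ :=
  ∑ k ∈ Finset.range n, if c k then u k else 0

noncomputable def tailSum (u : ℕ → ℝ) (n : ℕ) : ℝ := ∑' k, u (k + n)

section Subsum

variable {u : ℕ → ℝ}

theorem ite_mem_Icc (hu : ∀ n, 0 ≤ u n) (c : ℕ → Bool) (n : ℕ) :
    (if c n then u n else 0) ∈ Icc 0 (u n) := by
  split_ifs
  exacts [⟨hu n, le_rfl⟩, ⟨le_rfl, hu n⟩]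

theorem summable_ite (hu : ∀ n, 0 ≤ u n) (hs : Summable u) (c : ℕ → Bool) :
    Summable fun n => if c n then u n else 0 :=
  hs.of_nonneg_of_le (fun n => (ite_mem_Icc hu c n).1) fun n => (ite_mem_Icc hu c n).2

theorem subsum_mem_Icc (hu : ∀ n, 0 ≤ u n) (hs : Summable u) (c : ℕ → Bool) :
    subsum u c ∈ Icc 0 (∑' n, u n) :=
  ⟨tsum_nonneg fun n => (ite_mem_Icc hu c n).1,
    (summable_ite hu hs c).tsum_le_tsum (fun n => (ite_mem_Icc hu c n).2) hs⟩

theorem prefixSum_add_subsum (hu : ∀ n, 0 ≤ u n) (hs : Summable u) (c : ℕ → Bool) (n : ℕ) :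
    prefixSum u c n + subsum (fun k => u (k + n)) (fun k => c (k + n)) = subsum u c :=
  (summable_ite hu hs c).sum_add_tsum_nat_add n

theorem prefixSum_succ (c : ℕ → Bool) (n : ℕ) :
    prefixSum u c (n + 1) = prefixSum u c n + if c n then u n else 0 :=
  Finset.sum_range_succ _ n

theorem tailSum_eq_add (hs : Summable u) (n : ℕ) : tailSum u n = u n + tailSum u (n + 1) := by
  rw [tailSum, ((summable_nat_add_iff n).2 hs).tsum_eq_zero_add]
  simp only [tailSum, zero_add, add_right_comm _ 1 n, add_assoc]

theorem subsum_shift_mem_Icc (hu : ∀ n, 0 ≤ u n) (hs : Summable u) (c : ℕ → Bool) (n : ℕ) :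
    subsum (fun k => u (k + n)) (fun k => c (k + n)) ∈ Icc 0 (tailSum u n) :=
  subsum_mem_Icc (fun _ => hu _) ((summable_nat_add_iff n).2 hs) _

theorem continuous_subsum (hu : ∀ n, 0 ≤ u n) (hs : Summable u) : Continuous (subsum u) :=
  continuous_tsum (fun n => (continuous_of_discreteTopology (f := fun b : Bool =>
    if b then u n else 0)).comp (continuous_apply n)) hs
    fun n c => by rw [Real.norm_of_nonneg (ite_mem_Icc hu c n).1]; exact (ite_mem_Icc hu c n).2

theorem abs_subsum_update_sub (hu : ∀ n, 0 ≤ u n) (hs : Summable u) (c : ℕ → Bool) (n : ℕ) :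
    |subsum u (Function.update c n (!c n)) - subsum u c| = u n := by
  have hdiff : ∀ k,
      ((if Function.update c n (!c n) k then u k else 0) - if c k then u k else 0) =
      if k = n then (if !c n then u n else 0) - (if c n then u n else 0) else 0 := by
    intro k
    by_cases hk : k = n
    · subst hk; simp
    · simp [hk]
  unfold subsum
  rw [← (summable_ite hu hs _).tsum_sub (summable_ite hu hs c),
    tsum_congr hdiff, tsum_ite_eq]
  cases c n <;> simp [abs_of_nonneg (hu n)]

theorem perfect_range_subsum (hu : ∀ n, 0 < u n) (hs : Summable u) :
    Perfect (range (subsum u)) := by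
  have hu0 : ∀ n, 0 ≤ u n := fun n => (hu n).le
  refine ⟨(isCompact_range (continuous_subsum hu0 hs)).isClosed, ?_⟩
  refine preperfect_iff_nhds.2 ?_
  rintro _ ⟨c, rfl⟩
  intro U hU
  obtain ⟨ε, hε, hball⟩ := Metric.mem_nhds_iff.1 hU
  obtain ⟨n, hn⟩ := (hs.tendsto_atTop_zero.eventually (gt_mem_nhds hε)).exists
  have hdist := abs_subsum_update_sub hu0 hs c n
  refine ⟨_, ⟨hball ?_, mem_range_self (Function.update c n (!c n))⟩, fun h => ?_⟩
  · rwa [Metric.mem_ball, Real.dist_eq, hdist]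
  · rw [h, sub_self, abs_zero] at hdist
    exact (hu n).ne' hdist.symm

end Subsum

section Kakeya

variable {u : ℕ → ℝ}

theorem tailSum_nonneg (hu : ∀ n, 0 ≤ u n) (n : ℕ) : 0 ≤ tailSum u n :=
  tsum_nonneg fun _ => hu _

theorem tailSum_shift (N n : ℕ) : tailSum (fun k => u (k + N)) n = tailSum u (n + N) := by
  simp only [tailSum, add_assoc]

theorem lt_abs_prefixSum_sub_of_ne (hu : ∀ n, 0 ≤ u n) (hs : Summable u)
    (hk : ∀ n, tailSum u (n + 1) < u n) (c c' : ℕ → Bool) (n : ℕ)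
    (hne : prefixSum u c n ≠ prefixSum u c' n) :
    tailSum u n < |prefixSum u c n - prefixSum u c' n| := by
  induction n with
  | zero => simp [prefixSum] at hne
  | succ n ih =>
    rw [prefixSum_succ, prefixSum_succ] at hne ⊢
    by_cases h : prefixSum u c n = prefixSum u c' n
    · rw [h] at hne ⊢
      rw [add_sub_add_left_eq_sub]
      have := hk n
      cases hc : c n <;> cases hc' : c' n <;> simp_all [abs_of_nonneg (hu n)]
    · have ha := ite_mem_Icc hu c n
      have hb := ite_mem_Icc hu c' n
      have htail := tailSum_eq_add hs n
      rcases lt_abs.1 (ih h) with h' | h'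
      · exact lt_abs.2 (Or.inl (by linarith [ha.1, hb.2]))
      · exact lt_abs.2 (Or.inr (by linarith [ha.2, hb.1]))

theorem subsum_notMem_Ioo (hu : ∀ n, 0 ≤ u n) (hs : Summable u)
    (hk : ∀ n, tailSum u (n + 1) < u n) (c c' : ℕ → Bool) (n : ℕ) :
    subsum u c' ∉ Ioo (prefixSum u c n + tailSum u (n + 1)) (prefixSum u c n + u n) := by
  rintro ⟨hlo, hhi⟩
  have hsplit := prefixSum_add_subsum hu hs c' (n + 1)
  rw [prefixSum_succ] at hsplit
  have hr := subsum_shift_mem_Icc hu hs c' (n + 1)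
  by_cases h : prefixSum u c' n = prefixSum u c n
  · rw [h] at hsplit
    cases hc : c' n <;> simp only [hc, Bool.false_eq_true, if_false, if_true] at hsplit <;>
      linarith [hr.1, hr.2]
  · have hb := ite_mem_Icc hu c' n
    have htail := tailSum_eq_add hs n
    rcases lt_abs.1 (lt_abs_prefixSum_sub_of_ne hu hs hk c' c n h) with h' | h'
    · linarith [hr.1, hb.1, tailSum_nonneg hu (n + 1)]
    · linarith [hr.2, hb.2, tailSum_nonneg hu (n + 1)]

theorem interior_range_subsum_eq_empty (hu : ∀ n, 0 ≤ u n) (hs : Summable u)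
    (hk : ∀ n, tailSum u (n + 1) < u n) : interior (range (subsum u)) = ∅ := by
  refine eq_empty_of_forall_notMem fun x hx => ?_
  obtain ⟨ε, hε, hball⟩ := Metric.mem_nhds_iff.1 (mem_interior_iff_mem_nhds.1 hx)
  obtain ⟨c, rfl⟩ := interior_subset hx
  obtain ⟨n, hn⟩ := ((tendsto_sum_nat_add u).eventually (gt_mem_nhds hε)).exists
  have hsplit := prefixSum_add_subsum hu hs c n
  have hr := subsum_shift_mem_Icc hu hs c n
  have htail := tailSum_eq_add hs n
  have hkn := hk n
  have hn' : tailSum u n < ε := hn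
  -- with `s = prefixSum u c n`, the point `s + tailSum u n / 2` is the midpoint of the gap
  -- `(s + tailSum u (n + 1), s + u n)`
  obtain ⟨c', hc'⟩ := @hball (prefixSum u c n + tailSum u n / 2) (by
    rw [Metric.mem_ball, Real.dist_eq, abs_lt]; constructor <;> linarith [hr.1, hr.2])
  exact subsum_notMem_Ioo hu hs hk c c' n (by
    rw [hc']; constructor <;> linarith [tailSum_nonneg hu (n + 1)])

theorem interior_range_subsum_eq_empty_of_eventually (hu : ∀ n, 0 ≤ u n) (hs : Summable u)
    (hk : ∀ᶠ n in atTop, tailSum u (n + 1) < u n) : interior (range (subsum u)) = ∅ := by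
  obtain ⟨N, hN⟩ := eventually_atTop.1 hk
  set T := range (subsum fun k => u (k + N))
  have hsT : Summable fun k => u (k + N) := (summable_nat_add_iff N).2 hs
  have hT : interior T = ∅ :=
    interior_range_subsum_eq_empty (fun _ => hu _) hsT fun n => by
      rw [tailSum_shift, add_right_comm]; exact hN (n + N) (Nat.le_add_left N n)
  have hcover : range (subsum u) ⊆ ⋃ A ∈ ((Finset.range N).powerset : Set (Finset ℕ)),
      (fun x => ∑ k ∈ A, u k + x) '' T := by
    rintro _ ⟨c, rfl⟩
    refine mem_biUnion (x := (Finset.range N).filter fun k => c k) (Finset.mem_powerset.2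
      (Finset.filter_subset _ _)) ⟨_, mem_range_self fun k => c (k + N), ?_⟩
    rw [Finset.sum_filter, ← prefixSum_add_subsum hu hs c N, prefixSum]
  refine subset_empty_iff.1 ((interior_mono hcover).trans_eq
    (interior_biUnion_eq_empty (Finset.countable_toSet _) (fun A _ => ?_) fun A _ => ?_))
  · exact ((isCompact_range (continuous_subsum (fun _ => hu _) hsT)).image
      (continuous_const_add _)).isClosed
  · rw [show (fun x => ∑ k ∈ A, u k + x) '' T = Homeomorph.addLeft (∑ k ∈ A, u k) '' T
      from rfl, ← Homeomorph.image_interior, hT, image_empty]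

theorem isCantorLike_range_subsum (hu : ∀ n, 0 < u n) (hs : Summable u)
    (hk : ∀ᶠ n in atTop, tailSum u (n + 1) < u n) : IsCantorLike (range (subsum u)) :=
  ⟨range_nonempty _, isCompact_range (continuous_subsum (fun n => (hu n).le) hs),
    perfect_range_subsum hu hs,
    interior_range_subsum_eq_empty_of_eventually (fun n => (hu n).le) hs hk⟩

end Kakeya

theorem subsums_eq_range_subsum {z : ℕ → ℝ} (hz : ∀ n, 0 ≤ z (n + 1))
    (hs : Summable fun n => z (n + 1)) : subsums z = range (subsum fun n => z (n + 1)) := by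
  ext y
  constructor
  · rintro ⟨c, hc⟩
    exact ⟨fun n => c (n + 1), hc.tsum_eq⟩
  · rintro ⟨c, rfl⟩
    exact ⟨fun n => c (n - 1), (summable_ite hz hs c).hasSum⟩

theorem stmt_8_general (z : ℕ → ℝ)
    (hpos : ∀ n, 1 ≤ n → 0 < z n)
    (hsum : Summable (fun n : ℕ => z (n + 1)))
    (hcrit : ∃ N, ∀ n, N ≤ n → (∑' j : ℕ, z (n + 1 + j)) < z n) :
    Nonempty (subsums z ≃ₜ cantorSet) := by
  have hu : ∀ n, 0 < z (n + 1) := fun n => hpos (n + 1) (Nat.le_add_left 1 n)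
  obtain ⟨N, hN⟩ := hcrit
  have hk : ∀ᶠ n in atTop, tailSum (fun n => z (n + 1)) (n + 1) < z (n + 1) :=
    eventually_atTop.2 ⟨N, fun n hn => by
      simpa only [tailSum, add_comm, add_left_comm] using hN (n + 1) (by omega)⟩
  rw [subsums_eq_range_subsum (fun n => (hu n).le) hsum]
  obtain ⟨e⟩ := (isCantorLike_range_subsum hu hsum hk).nonempty_homeomorph
  exact ⟨e.symm.trans cantorSetHomeomorphNatToBool.symm⟩

/-- Kakeya–Hornich Cantor criterion: if each term strictly exceeds its tail for all but
finitely many `n`, the achievement set is homeomorphic to the Cantor set. -/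
theorem stmt_8 (z : ℕ → ℝ)
    (hpos : ∀ n, 1 ≤ n → 0 < z n)
    (hanti : ∀ n, 1 ≤ n → z (n + 1) ≤ z n)
    (hsum : Summable (fun n : ℕ => z (n + 1)))
    (hcrit : ∃ N, ∀ n, N ≤ n → (∑' j : ℕ, z (n + 1 + j)) < z n) :
    Nonempty (subsums z ≃ₜ cantorSet) :=
  stmt_8_general z hpos hsum hcrit
end

section
/- With the notation above, d_I ≤ d_{IM} := (b/(a+b))^{1/r}; consequently, if (b/(a+b))^{1/r} ≤ ε then E(w_n(x)) is a compact interval for every x ∈ [(b/(a+b))^{1/r}, ε]. -/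
open Set Finset

/-- `g m n = 1 + ((n-1) mod m)`: the index of the coefficient used in the `n`-th term. -/
def mgIdx (m n : ℕ) : ℕ := 1 + (n - 1) % m

/-- The `n`-th term (for `n ≥ 1`) of the generalized multigeometric series:
`w_n(x) = k_{g(n)} · f(x^⌊(m+n-1)/m⌋)`. -/
noncomputable def mgTerm (k : ℕ → ℝ) (f : ℝ → ℝ) (m n : ℕ) (x : ℝ) : ℝ :=
  k (mgIdx m n) * f (x ^ ((m + n - 1) / m))

/-- `K = k₁ + ⋯ + k_m`. -/
noncomputable def Ksum (k : ℕ → ℝ) (m : ℕ) : ℝ := ∑ i ∈ Finset.Icc 1 m, k i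

/-- `U_j = k_{j+1} + ⋯ + k_m`. -/
noncomputable def Usum (k : ℕ → ℝ) (m j : ℕ) : ℝ := ∑ i ∈ Finset.Icc (j + 1) m, k i

/-- `L_j = k₁ + ⋯ + k_j`. -/
noncomputable def Lsum (k : ℕ → ℝ) (j : ℕ) : ℝ := ∑ i ∈ Finset.Icc 1 j, k i

/-! Each ratio `(b k_j - a U_j) / (b k_j + a L_j)` is at most `b / (a + b)` since `k_j ≤ L_j` and
`U_j ≥ 0`. For `x ≥ d_{IM}` put `u = x ^ r ≥ b / (a + b)`. Then `w_{n+1}` lies between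
`a u g_n` and `b u g_n` with `g_n = k_{1 + n % m} u ^ (n / m)`, a series that sums blockwise to
`K / (1 - u)`. With `j = 1 + n % m` and `t = n / m + 1`, the tail after `w_{n+1}` contains
every later block, so it is at least `a u ^ (t + 1) K / (1 - u)`, which exceeds
`b k_j u ^ t ≥ w_{n+1}` exactly because `b (1 - u) ≤ a u`. By Kakeya's theorem (the greedy
algorithm) the subsums then fill `[0, ∑ w_n]`. -/

open Filter Topology

namespace Kakeya

variable {w : ℕ → ℝ} {y : ℝ}

noncomputable def greedySubsum (w : ℕ → ℝ) (y : ℝ) : ℕ → ℝ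
  | 0 => 0
  | n + 1 =>
    if greedySubsum w y n + w n ≤ y then greedySubsum w y n + w n else greedySubsum w y n

noncomputable def greedyChoice (w : ℕ → ℝ) (y : ℝ) (n : ℕ) : Bool :=
  decide (greedySubsum w y n + w n ≤ y)

lemma greedySubsum_succ (n : ℕ) :
    greedySubsum w y (n + 1) =
      greedySubsum w y n + if greedyChoice w y n then w n else 0 := by
  by_cases h : greedySubsum w y n + w n ≤ y <;> simp [greedySubsum, greedyChoice, h]

lemma sum_range_greedyChoice (n : ℕ) :
    ∑ i ∈ range n, (if greedyChoice w y i then w i else 0) = greedySubsum w y n := by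
  induction n with
  | zero => rfl
  | succ n ih => rw [sum_range_succ, ih, greedySubsum_succ]

lemma greedySubsum_mem_Icc (hw : Summable w) (hk : ∀ n, w n ≤ ∑' i, w (i + (n + 1)))
    (hy0 : 0 ≤ y) (hy : y ≤ ∑' n, w n) (n : ℕ) :
    greedySubsum w y n ∈ Set.Icc (y - ∑' i, w (i + n)) y := by
  induction n with
  | zero => exact ⟨by simpa [greedySubsum] using hy, hy0⟩
  | succ n ih =>
    have htail : ∑' i, w (i + n) = w n + ∑' i, w (i + (n + 1)) := by
      rw [((summable_nat_add_iff n).2 hw).tsum_eq_zero_add]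
      simp only [zero_add, add_right_comm _ 1 n, add_assoc]
    by_cases h : greedySubsum w y n + w n ≤ y
    · simp only [greedySubsum, if_pos h]
      exact ⟨by linarith [ih.1], h⟩
    · simp only [greedySubsum, if_neg h]
      exact ⟨by linarith [hk n], ih.2⟩

theorem exists_hasSum_ite (hw0 : ∀ n, 0 ≤ w n) (hw : Summable w)
    (hk : ∀ n, w n ≤ ∑' i, w (i + (n + 1))) (hy0 : 0 ≤ y) (hy : y ≤ ∑' n, w n) :
    ∃ c : ℕ → Bool, HasSum (fun n => if c n then w n else 0) y := by
  refine ⟨greedyChoice w y, ?_⟩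
  rw [hasSum_iff_tendsto_nat_of_nonneg (fun n => by split <;> simp [hw0 n])]
  simp only [sum_range_greedyChoice]
  have hlow : Tendsto (fun n => y - ∑' i, w (i + n)) atTop (𝓝 y) := by
    simpa using (tendsto_sum_nat_add w).const_sub y
  exact tendsto_of_tendsto_of_tendsto_of_le_of_le hlow tendsto_const_nhds
    (fun n => (greedySubsum_mem_Icc hw hk hy0 hy n).1)
    (fun n => (greedySubsum_mem_Icc hw hk hy0 hy n).2)

end Kakeya

/-- Kakeya's theorem. -/
theorem setOf_hasSum_ite_eq_Icc {w : ℕ → ℝ} (hw0 : ∀ n, 0 ≤ w n) (hw : Summable w)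
    (hk : ∀ n, w n ≤ ∑' i, w (i + (n + 1))) :
    {y | ∃ c : ℕ → Bool, HasSum (fun n => if c n then w n else 0) y} =
      Set.Icc 0 (∑' n, w n) := by
  ext y
  refine ⟨?_, fun hy => Kakeya.exists_hasSum_ite hw0 hw hk hy.1 hy.2⟩
  rintro ⟨c, hc⟩
  have hle : ∀ n, (if c n then w n else 0) ≤ w n := fun n => by split <;> simp [hw0 n]
  have hnn : ∀ n, 0 ≤ (if c n then w n else 0) := fun n => by split <;> simp [hw0 n]
  exact ⟨hc.nonneg hnn, hasSum_le hle hc hw.hasSum⟩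

theorem subsums_eq_setOf_hasSum (z : ℕ → ℝ) :
    subsums z = {y | ∃ c : ℕ → Bool, HasSum (fun n => if c n then z (n + 1) else 0) y} := by
  ext y
  constructor
  · rintro ⟨c, hc⟩
    exact ⟨fun n => c (n + 1), hc⟩
  · rintro ⟨c, hc⟩
    exact ⟨fun n => c (n - 1), by simpa using hc⟩

theorem hasSum_mul_pow_div {𝕜 : Type*} [NormedField 𝕜] [CompleteSpace 𝕜] (m : ℕ) [NeZero m]
    (c : ℕ → 𝕜) {u : 𝕜} (hu : ‖u‖ < 1) :
    HasSum (fun i => c (i % m) * u ^ (i / m)) ((∑ s ∈ range m, c s) * (1 - u)⁻¹) := by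
  have hc : HasSum (fun s : Fin m => c s) (∑ s : Fin m, c s) := hasSum_fintype _
  have hsum : Summable fun p : ℕ × Fin m => u ^ p.1 * c p.2 :=
    summable_mul_of_summable_norm (f := fun n => u ^ n) (g := fun s : Fin m => c s)
      (summable_norm_geometric_of_norm_lt_one hu) Summable.of_finite
  have hprod := (hasSum_geometric_of_norm_lt_one hu).mul hc hsum
  have hcomp : (fun p : ℕ × Fin m => u ^ p.1 * c p.2) ∘ Nat.divModEquiv m =
      fun i => c (i % m) * u ^ (i / m) := by
    ext i
    simp [mul_comm]
  rwa [← (Nat.divModEquiv m).hasSum_iff, hcomp, Fin.sum_univ_eq_sum_range, mul_comm] at hprod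

/-- Already the tail starting at the next full block of length `m` dominates `W n`. -/
theorem le_tsum_nat_add_of_le_mul_pow_div {W c : ℕ → ℝ} {m : ℕ} [NeZero m] {u α β : ℝ}
    (hu0 : 0 ≤ u) (hu1 : u < 1) (hα : 0 ≤ α) (hc : ∀ s < m, 0 ≤ c s) (hW : Summable W)
    (hlow : ∀ n, α * (c (n % m) * u ^ (n / m)) ≤ W n)
    (hup : ∀ n, W n ≤ β * (c (n % m) * u ^ (n / m)))
    (hcond : ∀ s < m, β * c s * (1 - u) ≤ α * u * ∑ s ∈ range m, c s) (n : ℕ) :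
    W n ≤ ∑' i, W (i + (n + 1)) := by
  have hm : 0 < m := Nat.pos_of_neZero m
  have hnext : n + 1 ≤ m * (n / m + 1) := Nat.lt_mul_div_succ n hm
  set t := n / m + 1
  set C := ∑ s ∈ range m, c s
  have hg := hasSum_mul_pow_div m c (u := u) (by rwa [Real.norm_of_nonneg hu0])
  have hW0 : ∀ n, 0 ≤ W n := fun n =>
    (mul_nonneg hα (mul_nonneg (hc _ (Nat.mod_lt n hm)) (pow_nonneg hu0 _))).trans (hlow n)
  have hblock : ∀ i, α * u ^ t * (c (i % m) * u ^ (i / m)) ≤ W (i + m * t) := fun i => by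
    have := hlow (i + m * t)
    rwa [Nat.add_mul_mod_self_left, Nat.add_mul_div_left _ _ hm, pow_add,
      mul_comm (u ^ _) (u ^ t), ← mul_assoc (c _), mul_comm (c _) (u ^ t), mul_assoc (u ^ t),
      ← mul_assoc α] at this
  calc W n ≤ β * c (n % m) * u ^ (n / m) := by rw [mul_assoc]; exact hup n
    _ ≤ α * u ^ t * C * (1 - u)⁻¹ := by
      rw [le_mul_inv_iff₀ (by linarith), pow_succ]
      have := mul_le_mul_of_nonneg_right (hcond _ (Nat.mod_lt n hm)) (pow_nonneg hu0 (n / m))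
      linarith
    _ = ∑' i, α * u ^ t * (c (i % m) * u ^ (i / m)) := by
      rw [tsum_mul_left, hg.tsum_eq, mul_assoc (α * u ^ t)]
    _ ≤ ∑' i, W (i + m * t) :=
      (hg.summable.mul_left _).tsum_le_tsum hblock ((summable_nat_add_iff _).2 hW)
    _ ≤ ∑' i, W (i + (n + 1)) := by
      refine ((summable_nat_add_iff _).2 hW).tsum_le_tsum_of_inj (· + (m * t - (n + 1)))
        (add_left_injective _) (fun _ _ => hW0 _) (fun i => ?_) ((summable_nat_add_iff _).2 hW)
      rw [add_assoc, Nat.sub_add_cancel hnext]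

section Coefficients

variable {k : ℕ → ℝ} {m : ℕ}

lemma Usum_nonneg (hk : ∀ i ∈ Finset.Icc 1 m, 0 ≤ k i) (j : ℕ) : 0 ≤ Usum k m j :=
  sum_nonneg fun i hi => hk i (by simp only [Finset.mem_Icc] at hi ⊢; omega)

lemma le_Lsum {j : ℕ} (hk : ∀ i ∈ Finset.Icc 1 j, 0 ≤ k i) (hj : 1 ≤ j) : k j ≤ Lsum k j :=
  single_le_sum hk (Finset.mem_Icc.2 ⟨hj, le_rfl⟩)

lemma Ksum_eq_sum_range (k : ℕ → ℝ) (m : ℕ) : Ksum k m = ∑ s ∈ range m, k (1 + s) := by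
  rw [Ksum, ← Finset.Ico_add_one_right_eq_Icc, sum_Ico_eq_sum_range, Nat.add_sub_cancel]

end Coefficients

lemma sub_div_add_le_div_add {a b κ U L : ℝ} (ha : 0 < a) (hb : 0 < b) (hκ : 0 < κ)
    (hκL : κ ≤ L) (hU : 0 ≤ U) : (b * κ - a * U) / (b * κ + a * L) ≤ b / (a + b) := by
  rw [div_le_div_iff₀ (by nlinarith) (by linarith)]
  nlinarith [mul_le_mul_of_nonneg_left hκL (mul_pos ha hb).le,
    mul_nonneg (mul_nonneg ha.le hb.le) hU, mul_nonneg (mul_nonneg ha.le ha.le) hU]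

theorem sup'_mem_Icc_zero_div_add {a b : ℝ} (ha : 0 < a) (hb : 0 < b) {m : ℕ} (hm : 1 ≤ m)
    {k : ℕ → ℝ} (hk : ∀ i ∈ Finset.Icc 1 m, 0 < k i) :
    (Finset.Icc 1 m).sup' (Finset.nonempty_Icc.mpr hm)
        (fun j => (b * k j - a * Usum k m j) / (b * k j + a * Lsum k j)) ∈
      Set.Icc 0 (b / (a + b)) := by
  refine ⟨?_, sup'_le _ _ fun j hj => ?_⟩
  · refine le_trans ?_ (le_sup' _ (Finset.mem_Icc.2 ⟨hm, le_rfl⟩))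
    have hkm := hk m (Finset.mem_Icc.2 ⟨hm, le_rfl⟩)
    have hLm : 0 ≤ Lsum k m := sum_nonneg fun i hi => (hk i hi).le
    simp only [Usum, Finset.Icc_eq_empty_of_lt (Nat.lt_succ_self m), sum_empty, mul_zero, sub_zero]
    positivity
  · have hj' := Finset.mem_Icc.1 hj
    exact sub_div_add_le_div_add ha hb (hk j hj)
      (le_Lsum (fun i hi => (hk i (by simp only [Finset.mem_Icc] at hi ⊢; omega)).le) hj'.1)
      (Usum_nonneg (fun i hi => (hk i hi).le) j)

lemma mgTerm_succ (k : ℕ → ℝ) (f : ℝ → ℝ) {m : ℕ} (hm : 0 < m) (n : ℕ) (x : ℝ) :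
    mgTerm k f m (n + 1) x = k (1 + n % m) * f (x ^ (n / m + 1)) := by
  have hnum : m + (n + 1) - 1 = n + 1 * m := by omega
  rw [mgTerm, mgIdx, hnum, Nat.add_mul_div_right _ _ hm, Nat.add_sub_cancel]

lemma apply_pow_mem_Icc {f : ℝ → ℝ} {a b r ε x : ℝ}
    (hf : ∀ y ∈ Set.Icc (0:ℝ) ε, a * y ^ r ≤ f y ∧ f y ≤ b * y ^ r)
    (hx0 : 0 ≤ x) (hxε : x ≤ ε) (hx1 : x ≤ 1) {t : ℕ} (ht : t ≠ 0) :
    f (x ^ t) ∈ Set.Icc (a * (x ^ r) ^ t) (b * (x ^ r) ^ t) := by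
  rw [Real.rpow_pow_comm hx0]
  exact hf _ ⟨pow_nonneg hx0 t, (pow_le_of_le_one hx0 hx1 ht).trans hxε⟩

lemma mgTerm_succ_mem_Icc {f : ℝ → ℝ} {a b r ε x : ℝ}
    (hf : ∀ y ∈ Set.Icc (0:ℝ) ε, a * y ^ r ≤ f y ∧ f y ≤ b * y ^ r)
    (hx0 : 0 ≤ x) (hxε : x ≤ ε) (hx1 : x ≤ 1) {m : ℕ} (hm : 0 < m) {k : ℕ → ℝ}
    (hk : ∀ i ∈ Finset.Icc 1 m, 0 ≤ k i) (n : ℕ) :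
    mgTerm k f m (n + 1) x ∈ Set.Icc (a * x ^ r * (k (1 + n % m) * (x ^ r) ^ (n / m)))
      (b * x ^ r * (k (1 + n % m) * (x ^ r) ^ (n / m))) := by
  have hkn := hk (1 + n % m) (Finset.mem_Icc.2 ⟨by omega, by have := Nat.mod_lt n hm; omega⟩)
  obtain ⟨hlow, hup⟩ := apply_pow_mem_Icc hf hx0 hxε hx1 (Nat.succ_ne_zero (n / m))
  rw [mgTerm_succ k f hm]
  constructor
  · calc a * x ^ r * (k (1 + n % m) * (x ^ r) ^ (n / m))
        _ = k (1 + n % m) * (a * (x ^ r) ^ (n / m + 1)) := by ring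
        _ ≤ _ := mul_le_mul_of_nonneg_left hlow hkn
  · calc k (1 + n % m) * f (x ^ (n / m + 1))
        _ ≤ k (1 + n % m) * (b * (x ^ r) ^ (n / m + 1)) := mul_le_mul_of_nonneg_left hup hkn
        _ = _ := by ring

theorem subsums_mgTerm_eq_Icc {f : ℝ → ℝ} {a b r ε x : ℝ} (ha : 0 < a) (hb : 0 < b)
    (hr : 0 < r) (hf : ∀ y ∈ Set.Icc (0:ℝ) ε, a * y ^ r ≤ f y ∧ f y ≤ b * y ^ r) (hε1 : ε < 1)
    {m : ℕ} (hm : 0 < m) {k : ℕ → ℝ} (hk : ∀ i ∈ Finset.Icc 1 m, 0 ≤ k i)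
    (hx0 : 0 < x) (hxε : x ≤ ε) (hbx : b / (a + b) ≤ x ^ r) :
    subsums (fun n => mgTerm k f m n x) = Set.Icc 0 (∑' n, mgTerm k f m (n + 1) x) := by
  have : NeZero m := ⟨hm.ne'⟩
  set u := x ^ r
  have hu0 : 0 < u := Real.rpow_pos_of_pos hx0 r
  have hu1 : u < 1 := Real.rpow_lt_one hx0.le (hxε.trans_lt hε1) hr
  have hbu : b * (1 - u) ≤ a * u := by
    rw [div_le_iff₀ (by linarith)] at hbx
    linarith
  have hW := mgTerm_succ_mem_Icc hf hx0.le hxε (hxε.trans hε1.le) hm hk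
  have hc : ∀ s < m, 0 ≤ k (1 + s) := fun s hs => hk _ (Finset.mem_Icc.2 ⟨by omega, by omega⟩)
  have hlow0 : ∀ n, 0 ≤ mgTerm k f m (n + 1) x := fun n =>
    (mul_nonneg (mul_nonneg ha.le hu0.le)
      (mul_nonneg (hc _ (Nat.mod_lt n hm)) (pow_nonneg hu0.le _))).trans (hW n).1
  have hg := hasSum_mul_pow_div m (fun s => k (1 + s)) (u := u)
    (by rwa [Real.norm_of_nonneg hu0.le])
  have hsum : Summable fun n => mgTerm k f m (n + 1) x :=
    (hg.summable.mul_left (b * u)).of_nonneg_of_le hlow0 fun n => (hW n).2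
  have hcond :
      ∀ s < m, b * u * k (1 + s) * (1 - u) ≤ a * u * u * ∑ s ∈ range m, k (1 + s) := by
    intro s hs
    have hkK : k (1 + s) ≤ ∑ s ∈ range m, k (1 + s) := by
      rw [← Ksum_eq_sum_range]
      exact single_le_sum hk (Finset.mem_Icc.2 ⟨by omega, by omega⟩)
    nlinarith [mul_le_mul_of_nonneg_right hbu (hc s hs),
      mul_le_mul_of_nonneg_left hkK (mul_pos ha hu0).le, mul_pos hu0 hu0]
  rw [subsums_eq_setOf_hasSum, setOf_hasSum_ite_eq_Icc hlow0 hsum]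
  exact le_tsum_nat_add_of_le_mul_pow_div hu0.le hu1 (mul_pos ha hu0).le hc hsum
    (fun n => (hW n).1) (fun n => (hW n).2) hcond

theorem stmt_11_general (f : ℝ → ℝ) (a b r ε : ℝ) (ha : 0 < a) (hb : 0 < b) (hr : 0 < r)
    (hε1 : ε < 1)
    (hf : ∀ x ∈ Set.Icc (0:ℝ) ε, a * x ^ r ≤ f x ∧ f x ≤ b * x ^ r)
    (m : ℕ) (hm : 1 ≤ m) (k : ℕ → ℝ)
    (hkmono : ∀ i j, 1 ≤ i → i ≤ j → j ≤ m → k j ≤ k i)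
    (hkpos : 0 < k m)
    (dI dIM : ℝ)
    (hdI : dI = ((Finset.Icc 1 m).sup' (Finset.nonempty_Icc.mpr hm)
        (fun j => (b * k j - a * Usum k m j) / (b * k j + a * Lsum k j))) ^ (1 / r))
    (hdIM : dIM = (b / (a + b)) ^ (1 / r)) :
    dI ≤ dIM ∧
    (dIM ≤ ε → ∀ x ∈ Set.Icc dIM ε,
      ∃ p q : ℝ, p ≤ q ∧ subsums (fun n => mgTerm k f m n x) = Set.Icc p q) := by
  have hk : ∀ i ∈ Finset.Icc 1 m, 0 < k i := fun i hi =>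
    hkpos.trans_le (hkmono i m (Finset.mem_Icc.1 hi).1 (Finset.mem_Icc.1 hi).2 le_rfl)
  have hab : 0 ≤ b / (a + b) := by positivity
  obtain ⟨hsup0, hsup⟩ := sup'_mem_Icc_zero_div_add ha hb hm hk
  refine ⟨hdI ▸ hdIM ▸ Real.rpow_le_rpow hsup0 hsup (by positivity), fun _ x ⟨hx1, hxε⟩ => ?_⟩
  have hx0 : 0 < x := (hdIM ▸ Real.rpow_pos_of_pos (by positivity) _).trans_le hx1
  have hbx : b / (a + b) ≤ x ^ r := by
    rwa [hdIM, one_div, Real.rpow_inv_le_iff_of_pos hab hx0.le hr] at hx1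
  have heq := subsums_mgTerm_eq_Icc ha hb hr hf hε1 hm (fun i hi => (hk i hi).le) hx0 hxε hbx
  have hzero : (0:ℝ) ∈ subsums (fun n => mgTerm k f m n x) :=
    ⟨fun _ => false, by simp [hasSum_zero]⟩
  rw [heq] at hzero
  exact ⟨_, _, hzero.2, heq⟩

/-- `d_I ≤ d_{IM} = (b/(a+b))^{1/r}`; consequently if `d_{IM} ≤ ε` then the achievement set
is a compact interval for every `x ∈ [d_{IM}, ε]`. -/
theorem stmt_11 (f : ℝ → ℝ) (a b r ε : ℝ) (ha : 0 < a) (hb : 0 < b) (hr : 0 < r)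
    (hε : 0 < ε) (hε1 : ε < 1)
    (hmono : MonotoneOn f (Set.Icc 0 ε))
    (hf : ∀ x ∈ Set.Icc (0:ℝ) ε, a * x ^ r ≤ f x ∧ f x ≤ b * x ^ r)
    (m : ℕ) (hm : 1 ≤ m) (k : ℕ → ℝ)
    (hkmono : ∀ i j, 1 ≤ i → i ≤ j → j ≤ m → k j ≤ k i)
    (hkpos : 0 < k m)
    (dI dIM : ℝ)
    (hdI : dI = ((Finset.Icc 1 m).sup' (Finset.nonempty_Icc.mpr hm)
        (fun j => (b * k j - a * Usum k m j) / (b * k j + a * Lsum k j))) ^ (1 / r))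
    (hdIM : dIM = (b / (a + b)) ^ (1 / r)) :
    dI ≤ dIM ∧
    (dIM ≤ ε → ∀ x ∈ Set.Icc dIM ε,
      ∃ p q : ℝ, p ≤ q ∧ subsums (fun n => mgTerm k f m n x) = Set.Icc p q) :=
  stmt_11_general f a b r ε ha hb hr hε1 hf m hm k hkmono hkpos dI dIM hdI hdIM
end

section
/- For x ∈ (0,ε) and any n ≥ 1: ∑_{ℓ>n} w_ℓ(x) ≤ b·x^{⌊(m+n−1)/m⌋·r}·(U_{g(n)} + K·x^r/(1−x^r)) and w_n(x) ≥ a·k_{g(n)}·x^{⌊(m+n−1)/m⌋·r}, where U_j = k_{j+1}+...+k_m and K = ∑ k_i. -/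
open Set Finset

/-! Write `n = m t + i + 1` with `i < m`; then `g(n) = i + 1` and `⌊(m+n-1)/m⌋ = t + 1`, so the
series falls into blocks of length `m` on which the exponent is constant. With `y = x^r`, the bounds
on `f` sandwich `w_ℓ(x)` between `a` and `b` times the model term `k_{g(ℓ)} y^{⌊(m+ℓ-1)/m⌋}`, i.e.
`mgTerm k id m ℓ y`. The tail of the model series after `n` is the rest of block `t`, summing to
`y^{t+1} U_{i+1}`, followed by the full blocks `s ≥ t + 1`, which contribute `y^{s+1} K` each: a
geometric series with sum `y^{t+1} K y / (1 - y)`. -/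

namespace Multigeometric

variable {k : ℕ → ℝ} {m : ℕ}

lemma mgIdx_block {t i : ℕ} (hi : i < m) : mgIdx m (m * t + i + 1) = i + 1 := by
  rw [mgIdx, Nat.add_sub_cancel, Nat.mul_add_mod_self_left, Nat.mod_eq_of_lt hi, add_comm]

lemma block_exponent {t i : ℕ} (hi : i < m) : (m + (m * t + i + 1) - 1) / m = t + 1 := by
  rw [show m + (m * t + i + 1) - 1 = m * (t + 1) + i by ring_nf; omega,
    Nat.mul_add_div (by omega), Nat.div_eq_of_lt hi, add_zero]

lemma mgTerm_block (f : ℝ → ℝ) (x : ℝ) {t i : ℕ} (hi : i < m) :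
    mgTerm k f m (m * t + i + 1) x = k (i + 1) * f (x ^ (t + 1)) := by
  rw [mgTerm, mgIdx_block hi, block_exponent hi]

lemma exists_block_eq (hm : 0 < m) {n : ℕ} (hn : 1 ≤ n) : ∃ t i, i < m ∧ n = m * t + i + 1 :=
  ⟨(n - 1) / m, (n - 1) % m, Nat.mod_lt _ hm, by rw [Nat.div_add_mod]; omega⟩

lemma mgIdx_mem_Icc (hm : 0 < m) (n : ℕ) : mgIdx m n ∈ Set.Icc 1 m := by
  have := Nat.mod_lt (n - 1) hm
  exact ⟨by simp only [mgIdx]; omega, by simp only [mgIdx]; omega⟩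

lemma one_le_add_sub_one_div (hm : 0 < m) {n : ℕ} (hn : 1 ≤ n) : 1 ≤ (m + n - 1) / m :=
  (Nat.le_div_iff_mul_le hm).2 (by omega)

lemma Usum_eq_sum_range (j : ℕ) : Usum k m j = ∑ l ∈ range (m - j), k (j + 1 + l) := by
  rw [Usum, ← Finset.Ico_add_one_right_eq_Icc, Finset.sum_Ico_eq_sum_range, Nat.add_sub_add_right]

lemma Ksum_eq_sum_fin : Ksum k m = ∑ i : Fin m, k (i + 1) := by
  rw [Fin.sum_univ_eq_sum_range (fun i => k (i + 1))]
  exact (Usum_eq_sum_range 0).trans (by simp only [zero_add, Nat.sub_zero, add_comm])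

lemma mgTerm_rpow {x : ℝ} (hx : 0 ≤ x) (c r : ℝ) (n : ℕ) :
    mgTerm k (fun z => c * z ^ r) m n x = c * mgTerm k id m n (x ^ r) := by
  simp only [mgTerm, id, Real.rpow_pow_comm hx]
  ring

lemma hasSum_mgTerm_id_block [NeZero m] {y : ℝ} (hy0 : 0 ≤ y) (hy1 : y < 1) (s : ℕ) :
    HasSum (fun j => mgTerm k id m (m * s + 1 + j) y) (y ^ (s + 1) * Ksum k m / (1 - y)) := by
  have hgeom := hasSum_geometric_of_lt_one hy0 hy1
  have hsum : Summable fun p : ℕ × Fin m => y ^ p.1 * k (p.2.val + 1) :=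
    summable_mul_of_summable_norm (f := fun t : ℕ => y ^ t) (g := fun i : Fin m => k (i.val + 1))
      (by simpa only [norm_pow, Real.norm_of_nonneg hy0] using hgeom.summable) Summable.of_finite
  have hprod :=
    (hgeom.mul (hasSum_fintype fun i : Fin m => k (i.val + 1)) hsum).mul_left (y ^ (s + 1))
  have hnat := (Nat.divModEquiv m).hasSum_iff.mpr hprod
  rw [show y ^ (s + 1) * Ksum k m / (1 - y) = y ^ (s + 1) * ((1 - y)⁻¹ * ∑ i : Fin m, k (i + 1))
    by rw [Ksum_eq_sum_fin]; ring]
  refine hnat.congr_fun fun j => ?_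
  have hj : m * s + 1 + j = m * (s + j / m) + j % m + 1 := by
    have := Nat.div_add_mod j m
    ring_nf; omega
  rw [hj, mgTerm_block _ _ (Nat.mod_lt j (NeZero.pos m))]
  simp only [Function.comp_apply, Nat.divModEquiv_apply, Fin.val_ofNat, id, pow_add]
  ring

lemma hasSum_mgTerm_id_tail [NeZero m] {y : ℝ} (hy0 : 0 ≤ y) (hy1 : y < 1) {i : ℕ}
    (hi : i < m) (t : ℕ) :
    HasSum (fun j => mgTerm k id m (m * t + i + 1 + 1 + j) y)
      (y ^ (t + 1) * (Usum k m (i + 1) + Ksum k m * y / (1 - y))) := by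
  have hblock := hasSum_mgTerm_id_block (k := k) (m := m) hy0 hy1 (t + 1)
  have hhead : ∑ j ∈ range (m - (i + 1)), mgTerm k id m (m * t + i + 1 + 1 + j) y
      = y ^ (t + 1) * Usum k m (i + 1) := by
    rw [Usum_eq_sum_range, Finset.mul_sum]
    refine Finset.sum_congr rfl fun j hj => ?_
    rw [show m * t + i + 1 + 1 + j = m * t + (i + 1 + j) + 1 by ring,
      mgTerm_block _ _ (by simp at hj; omega), id, mul_comm, add_right_comm]
  have hy : 1 - y ≠ 0 := by linarith
  rw [← hasSum_nat_add_iff' (m - (i + 1)), hhead,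
    show y ^ (t + 1) * (Usum k m (i + 1) + Ksum k m * y / (1 - y)) - y ^ (t + 1) * Usum k m (i + 1)
      = y ^ (t + 1 + 1) * Ksum k m / (1 - y) by field_simp; ring]
  exact hblock.congr_fun fun j => by congr 1; rw [Nat.mul_succ]; omega

end Multigeometric

open Multigeometric

theorem stmt_19_general (f : ℝ → ℝ) (a b r ε : ℝ) (ha : 0 < a) (hr : 0 < r)
    (hε1 : ε < 1)
    (hf : ∀ x ∈ Set.Icc (0:ℝ) ε, a * x ^ r ≤ f x ∧ f x ≤ b * x ^ r)
    (m : ℕ) (hm : 1 ≤ m) (k : ℕ → ℝ)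
    (hkmono : ∀ i j, 1 ≤ i → i ≤ j → j ≤ m → k j ≤ k i)
    (hkpos : 0 < k m) :
    ∀ x : ℝ, 0 < x → x < ε → ∀ n : ℕ, 1 ≤ n →
      (∑' j : ℕ, mgTerm k f m (n + 1 + j) x) ≤
        b * x ^ ((((m + n - 1) / m : ℕ) : ℝ) * r) *
          (Usum k m (mgIdx m n) + Ksum k m * x ^ r / (1 - x ^ r)) ∧
      a * k (mgIdx m n) * x ^ ((((m + n - 1) / m : ℕ) : ℝ) * r) ≤ mgTerm k f m n x := by
  intro x hx0 hxε n hn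
  have : NeZero m := ⟨by omega⟩
  obtain ⟨t, i, hi, rfl⟩ := exists_block_eq hm hn
  have hy0 : 0 ≤ x ^ r := by positivity
  have hy1 : x ^ r < 1 := Real.rpow_lt_one hx0.le (hxε.trans hε1) hr
  have hk (ℓ : ℕ) : 0 ≤ k (mgIdx m ℓ) :=
    hkpos.le.trans (hkmono _ _ (mgIdx_mem_Icc hm ℓ).1 (mgIdx_mem_Icc hm ℓ).2 le_rfl)
  have hdom {ℓ : ℕ} (hℓ : 1 ≤ ℓ) : x ^ ((m + ℓ - 1) / m) ∈ Icc 0 ε :=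
    ⟨by positivity, (pow_le_of_le_one hx0.le (hxε.trans hε1).le
      (by have := one_le_add_sub_one_div hm hℓ; omega)).trans hxε.le⟩
  have hlower {ℓ : ℕ} (hℓ : 1 ≤ ℓ) : a * mgTerm k id m ℓ (x ^ r) ≤ mgTerm k f m ℓ x := by
    rw [← mgTerm_rpow hx0.le]
    exact mul_le_mul_of_nonneg_left (hf _ (hdom hℓ)).1 (hk ℓ)
  have hupper {ℓ : ℕ} (hℓ : 1 ≤ ℓ) : mgTerm k f m ℓ x ≤ b * mgTerm k id m ℓ (x ^ r) := by
    rw [← mgTerm_rpow hx0.le]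
    exact mul_le_mul_of_nonneg_left (hf _ (hdom hℓ)).2 (hk ℓ)
  have htail := (hasSum_mgTerm_id_tail (k := k) hy0 hy1 hi t).mul_left b
  have hsummable : Summable fun j => mgTerm k f m (m * t + i + 1 + 1 + j) x :=
    .of_nonneg_of_le (fun j => (mul_nonneg ha.le (mul_nonneg (hk _) (pow_nonneg hy0 _))).trans
      (hlower (by omega))) (fun j => hupper (by omega)) htail.summable
  rw [block_exponent hi, mgIdx_block hi, mul_comm _ r, Real.rpow_mul_natCast hx0.le]
  refine ⟨(hsummable.tsum_le_tsum (fun j => hupper (by omega)) htail.summable).trans_eq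
    (htail.tsum_eq.trans (by ring)), ?_⟩
  have := hlower (ℓ := m * t + i + 1) (by omega)
  rwa [mgTerm_block _ _ hi, id, ← mul_assoc] at this

/-- Key tail estimates: for `x ∈ (0,ε)` and `n ≥ 1`,
`∑_{ℓ>n} w_ℓ(x) ≤ b·x^{⌊(m+n-1)/m⌋·r}·(U_{g(n)} + K·xʳ/(1−xʳ))` and
`w_n(x) ≥ a·k_{g(n)}·x^{⌊(m+n-1)/m⌋·r}`. -/
theorem stmt_19 (f : ℝ → ℝ) (a b r ε : ℝ) (ha : 0 < a) (hb : 0 < b) (hr : 0 < r)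
    (hε : 0 < ε) (hε1 : ε < 1)
    (hmono : MonotoneOn f (Set.Icc 0 ε))
    (hf : ∀ x ∈ Set.Icc (0:ℝ) ε, a * x ^ r ≤ f x ∧ f x ≤ b * x ^ r)
    (m : ℕ) (hm : 1 ≤ m) (k : ℕ → ℝ)
    (hkmono : ∀ i j, 1 ≤ i → i ≤ j → j ≤ m → k j ≤ k i)
    (hkpos : 0 < k m) :
    ∀ x : ℝ, 0 < x → x < ε → ∀ n : ℕ, 1 ≤ n →
      (∑' j : ℕ, mgTerm k f m (n + 1 + j) x) ≤
        b * x ^ ((((m + n - 1) / m : ℕ) : ℝ) * r) *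
          (Usum k m (mgIdx m n) + Ksum k m * x ^ r / (1 - x ^ r)) ∧
      a * k (mgIdx m n) * x ^ ((((m + n - 1) / m : ℕ) : ℝ) * r) ≤ mgTerm k f m n x :=
  stmt_19_general f a b r ε ha hr hε1 hf m hm k hkmono hkpos
end
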